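/- Suppose the free states on the composite system are ℱ_AB = conv{ρ_A ⊗ ρ_B : ρ_A ∈ ℱ_A, ρ_B ∈ ℱ_B}. Then for any channels N₁ on system A and N₂ on system B, the trace-norm resource generating power satisfies Ω₁(N₁ ⊗ N₂) ≥ max{Ω₁(N₁), Ω₁(N₂)}, where Ω₁(N₁ ⊗ N₂) is computed with respect to ℱ_AB and Ω₁(Nᵢ) with respect to ℱ_A, ℱ_B respectively. -/

import Mathlib

open scoped Kronecker ComplexOrder

variable {ι : Type*} [Fintype ι] [DecidableEq ι]

/-- A quantum state: positive semidefinite matrix of trace one. -/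
def IsState (ρ : Matrix ι ι ℂ) : Prop := ρ.PosSemidef ∧ ρ.trace = 1

/-- The action of `id_n ⊗ N` on block matrices. -/
def idTensorMap (n : ℕ) (N : Matrix ι ι ℂ →ₗ[ℂ] Matrix ι ι ℂ)
    (M : Matrix (Fin n × ι) (Fin n × ι) ℂ) : Matrix (Fin n × ι) (Fin n × ι) ℂ :=
  Matrix.of fun p q => N (Matrix.of fun k l => M (p.1, k) (q.1, l)) p.2 q.2

/-- A quantum channel: completely positive trace preserving linear map. -/
structure Channel (ι : Type*) [Fintype ι] [DecidableEq ι] where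
  map : Matrix ι ι ℂ →ₗ[ℂ] Matrix ι ι ℂ
  cp : ∀ (n : ℕ) (M : Matrix (Fin n × ι) (Fin n × ι) ℂ), M.PosSemidef →
        (idTensorMap n map M).PosSemidef
  tp : ∀ A : Matrix ι ι ℂ, (map A).trace = A.trace

/-- The trace norm ‖A‖₁ = Tr √(AᴴA). -/
noncomputable def traceNorm (A : Matrix ι ι ℂ) : ℝ :=
  ((Matrix.posSemidef_conjTranspose_mul_self A).1.eigenvectorUnitary.1 *
    Matrix.diagonal (((↑) : ℝ → ℂ) ∘ Real.sqrt ∘ (Matrix.posSemidef_conjTranspose_mul_self A).1.eigenvalues) *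
    (star (Matrix.posSemidef_conjTranspose_mul_self A).1.eigenvectorUnitary : Matrix ι ι ℂ)).trace.re

/-- Trace-norm resource measure ω₁. -/
noncomputable def omega1 (F : Set (Matrix ι ι ℂ)) (ρ : Matrix ι ι ℂ) : ℝ :=
  (1/2) * sInf ((fun σ => traceNorm (ρ - σ)) '' F)

/-- Trace-norm resource generating power Ω₁. -/
noncomputable def genPower1 (F : Set (Matrix ι ι ℂ)) (N : Matrix ι ι ℂ → Matrix ι ι ℂ) : ℝ :=
  sSup ((fun ρ => omega1 F (N ρ)) '' F)

/-- Trace-norm resource increasing power Ω̃₁. -/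
noncomputable def incPower1 (F : Set (Matrix ι ι ℂ)) (N : Matrix ι ι ℂ → Matrix ι ι ℂ) : ℝ :=
  sSup ((fun ρ => omega1 F (N ρ) - omega1 F ρ) '' {ρ | IsState ρ})

/-- Holevo–Helstrom success probability of discriminating two channels with probe `ρ`. -/
noncomputable def psuccPair (N M : Matrix ι ι ℂ → Matrix ι ι ℂ) (ρ : Matrix ι ι ℂ) : ℝ :=
  1/2 + (1/4) * traceNorm (N ρ - M ρ)

/-- Success probability of discriminating `N` from the set of channels `Free` with probe `ρ`. -/
noncomputable def psuccChan (N : Matrix ι ι ℂ → Matrix ι ι ℂ) (Free : Set (Channel ι))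
    (ρ : Matrix ι ι ℂ) : ℝ :=
  sInf ((fun M : Channel ι => psuccPair N (⇑M.map) ρ) '' Free)

/-- Maximum success probability of discriminating `N` from `Free` using probes from `F`. -/
noncomputable def psuccFF (N : Matrix ι ι ℂ → Matrix ι ι ℂ) (Free : Set (Channel ι))
    (F : Set (Matrix ι ι ℂ)) : ℝ :=
  sSup ((fun ρ => psuccChan N Free ρ) '' F)

/-- The action of the tensor product channel `N₁ ⊗ N₂` on matrices of the composite system,
characterized by `(N₁ ⊗ N₂)(A ⊗ B) = N₁(A) ⊗ N₂(B)` and linearity. -/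
noncomputable def tensorMapAction {A B : Type*} [Fintype A] [DecidableEq A]
    [Fintype B] [DecidableEq B]
    (N₁ : Matrix A A ℂ →ₗ[ℂ] Matrix A A ℂ) (N₂ : Matrix B B ℂ →ₗ[ℂ] Matrix B B ℂ)
    (M : Matrix (A × B) (A × B) ℂ) : Matrix (A × B) (A × B) ℂ :=
  ∑ i : A, ∑ j : A,
    (N₁ (Matrix.single i j 1)) ⊗ₖ (N₂ (Matrix.of fun k l => M (i, k) (j, l)))

/-!
For `ρ ∈ FA` and a fixed `b ∈ FB`, the product `ρ ⊗ b` is free on `AB` and is mapped to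
`N₁ ρ ⊗ N₂ b`. The partial trace `Tr_B τ` of any free `τ` on `AB` lies in `FA`, being a convex
combination of free states of `A`, and the partial trace does not increase the trace norm, because
`‖H‖₁ = max {Re Tr (P H) : -1 ≤ P ≤ 1}` and `P ↦ P ⊗ 1` preserves `-1 ≤ P ≤ 1`. Hence
`‖N₁ ρ ⊗ N₂ b - τ‖₁ ≥ ‖N₁ ρ - Tr_B τ‖₁ ≥ 2 ω₁(N₁ ρ)`, so `Ω₁(N₁) ≤ Ω₁(N₁ ⊗ N₂)`; symmetrically
for `N₂`.
-/

open Matrix Unitary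

namespace Matrix

section PartialTrace

variable {R m p : Type*}

lemma sub_kronecker [Ring R] (A₁ A₂ : Matrix m m R) (B : Matrix p p R) :
    (A₁ - A₂) ⊗ₖ B = A₁ ⊗ₖ B - A₂ ⊗ₖ B := by
  ext; simp [sub_mul]

lemma kronecker_sub [Ring R] (A : Matrix m m R) (B₁ B₂ : Matrix p p R) :
    A ⊗ₖ (B₁ - B₂) = A ⊗ₖ B₁ - A ⊗ₖ B₂ := by
  ext; simp [mul_sub]

lemma IsHermitian.kronecker [CommRing R] [StarRing R] {A : Matrix m m R} {B : Matrix p p R}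
    (hA : A.IsHermitian) (hB : B.IsHermitian) : (A ⊗ₖ B).IsHermitian := by
  rw [IsHermitian, conjTranspose_kronecker, hA.eq, hB.eq]

lemma sum_kronecker [NonUnitalNonAssocSemiring R] {γ : Type*} (s : Finset γ) (A : γ → Matrix m m R)
    (B : Matrix p p R) : (∑ i ∈ s, A i) ⊗ₖ B = ∑ i ∈ s, A i ⊗ₖ B := by
  ext; simp [sum_apply, Finset.sum_mul]

variable [CommSemiring R]

def partialTraceRight [Fintype p] : Matrix (m × p) (m × p) R →ₗ[R] Matrix m m R where
  toFun M := of fun i j => ∑ k, M (i, k) (j, k)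
  map_add' M N := by ext; simp [Finset.sum_add_distrib]
  map_smul' c M := by ext; simp [Finset.mul_sum]

def partialTraceLeft [Fintype m] : Matrix (m × p) (m × p) R →ₗ[R] Matrix p p R where
  toFun M := of fun i j => ∑ k, M (k, i) (k, j)
  map_add' M N := by ext; simp [Finset.sum_add_distrib]
  map_smul' c M := by ext; simp [Finset.mul_sum]

lemma partialTraceRight_kronecker [Fintype p] (a : Matrix m m R) (b : Matrix p p R) :
    partialTraceRight (a ⊗ₖ b) = b.trace • a := by
  ext; simp [partialTraceRight, trace, Finset.mul_sum, mul_comm]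

lemma partialTraceLeft_kronecker [Fintype m] (a : Matrix m m R) (b : Matrix p p R) :
    partialTraceLeft (a ⊗ₖ b) = a.trace • b := by
  ext; simp [partialTraceLeft, trace, Finset.sum_mul]

lemma trace_kronecker_one_mul [Fintype m] [Fintype p] [DecidableEq p] (P : Matrix m m R)
    (M : Matrix (m × p) (m × p) R) :
    ((P ⊗ₖ (1 : Matrix p p R)) * M).trace = (P * partialTraceRight M).trace := by
  simp only [trace, diag_apply, mul_apply, kroneckerMap_apply, one_apply, mul_ite, mul_one,
    mul_zero, ite_mul, zero_mul, Fintype.sum_prod_type, Finset.sum_ite_eq, Finset.mem_univ,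
    ↓reduceIte, partialTraceRight, LinearMap.coe_mk, AddHom.coe_mk, of_apply, Finset.mul_sum]
  exact Finset.sum_congr rfl fun _ _ => Finset.sum_comm

lemma trace_one_kronecker_mul [Fintype m] [Fintype p] [DecidableEq m] (P : Matrix p p R)
    (M : Matrix (m × p) (m × p) R) :
    (((1 : Matrix m m R) ⊗ₖ P) * M).trace = (P * partialTraceLeft M).trace := by
  simp only [trace, diag_apply, mul_apply, kroneckerMap_apply, one_apply, ite_mul, one_mul,
    zero_mul, Fintype.sum_prod_type, Finset.sum_ite_irrel, Finset.sum_const_zero, Finset.sum_ite_eq,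
    Finset.mem_univ, ↓reduceIte, partialTraceLeft, LinearMap.coe_mk, AddHom.coe_mk, of_apply,
    Finset.mul_sum]
  rw [Finset.sum_comm]
  exact Finset.sum_congr rfl fun _ _ => Finset.sum_comm

lemma conjTranspose_partialTraceRight [StarRing R] [Fintype p] (M : Matrix (m × p) (m × p) R) :
    (partialTraceRight M)ᴴ = partialTraceRight Mᴴ := by
  ext; simp [partialTraceRight]

lemma conjTranspose_partialTraceLeft [StarRing R] [Fintype m] (M : Matrix (m × p) (m × p) R) :
    (partialTraceLeft M)ᴴ = partialTraceLeft Mᴴ := by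
  ext; simp [partialTraceLeft]

lemma IsHermitian.partialTraceRight [StarRing R] [Fintype p] {M : Matrix (m × p) (m × p) R}
    (hM : M.IsHermitian) : (partialTraceRight M).IsHermitian := by
  rw [IsHermitian, conjTranspose_partialTraceRight, hM.eq]

lemma IsHermitian.partialTraceLeft [StarRing R] [Fintype m] {M : Matrix (m × p) (m × p) R}
    (hM : M.IsHermitian) : (partialTraceLeft M).IsHermitian := by
  rw [IsHermitian, conjTranspose_partialTraceLeft, hM.eq]

end PartialTrace

end Matrix

lemma Set.MapsTo.convexHull {E F : Type*} [AddCommGroup E] [Module ℝ E] [AddCommGroup F]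
    [Module ℝ F] {f : E →ₗ[ℝ] F} {s : Set E} {t : Set F} (hst : Set.MapsTo f s t)
    (ht : Convex ℝ t) : Set.MapsTo f (convexHull ℝ s) t := fun _ hx =>
  convexHull_min hst.image_subset ht (f.image_convexHull s ▸ Set.mem_image_of_mem f hx)

lemma abs_re_diag_le_one {n : Type*} [DecidableEq n] {Q : Matrix n n ℂ}
    (h₁ : (1 - Q).PosSemidef) (h₂ : (1 + Q).PosSemidef) (i : n) : |(Q i i).re| ≤ 1 := by
  have hle := (Complex.nonneg_iff.1 (h₁.diag_nonneg (i := i))).1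
  have hge := (Complex.nonneg_iff.1 (h₂.diag_nonneg (i := i))).1
  simp only [Matrix.sub_apply, Matrix.add_apply, one_apply_eq, Complex.sub_re, Complex.add_re,
    Complex.one_re] at hle hge
  exact abs_le.2 ⟨by linarith, by linarith⟩

section TraceNorm

variable {n : Type*} [Fintype n] [DecidableEq n]

lemma Matrix.IsHermitian.trace_cfc {H : Matrix n n ℂ} (hH : H.IsHermitian) (f : ℝ → ℝ) :
    (cfc f H).trace = ∑ i, (f (hH.eigenvalues i) : ℂ) := by
  rw [hH.cfc_eq, IsHermitian.cfc, conjStarAlgAut_apply, trace_mul_cycle, coe_star_mul_self,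
    one_mul, trace_diagonal]
  rfl

lemma traceNorm_eq_re_trace_cfc_sqrt (A : Matrix n n ℂ) :
    traceNorm A = (cfc Real.sqrt (Aᴴ * A)).trace.re := by
  rw [(isHermitian_conjTranspose_mul_self A).cfc_eq]
  rfl

lemma traceNorm_nonneg (A : Matrix n n ℂ) : 0 ≤ traceNorm A := by
  rw [traceNorm_eq_re_trace_cfc_sqrt, (isHermitian_conjTranspose_mul_self A).trace_cfc,
    Complex.re_sum]
  exact Finset.sum_nonneg fun i _ => Real.sqrt_nonneg _

lemma Matrix.IsHermitian.traceNorm_eq {H : Matrix n n ℂ} (hH : H.IsHermitian) :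
    traceNorm H = ∑ i, |hH.eigenvalues i| := by
  have hsq : Hᴴ * H = cfc (fun x : ℝ => x * x) H := by
    rw [hH.eq, cfc_mul (fun x : ℝ => x) (fun x : ℝ => x) H, cfc_id' ℝ H]
  rw [traceNorm_eq_re_trace_cfc_sqrt, hsq, ← cfc_comp Real.sqrt (fun x : ℝ => x * x) H,
    hH.trace_cfc, Complex.re_sum]
  simp [Real.sqrt_mul_self_eq_abs]

lemma Matrix.PosSemidef.traceNorm_eq {ρ : Matrix n n ℂ} (hρ : ρ.PosSemidef) :
    traceNorm ρ = ρ.trace.re := by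
  rw [hρ.1.traceNorm_eq, hρ.1.trace_eq_sum_eigenvalues, Complex.re_sum]
  simp [abs_of_nonneg (hρ.eigenvalues_nonneg _)]

lemma Matrix.IsHermitian.trace_mul_eq_sum_eigenvalues {H : Matrix n n ℂ} (hH : H.IsHermitian)
    (Q : Matrix n n ℂ) :
    (Q * H).trace = ∑ i, ((star (hH.eigenvectorUnitary : Matrix n n ℂ)) * Q *
      hH.eigenvectorUnitary) i i * hH.eigenvalues i := by
  conv_lhs => rw [hH.spectral_theorem, conjStarAlgAut_apply, ← Matrix.mul_assoc, ← Matrix.mul_assoc,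
    trace_mul_cycle, ← Matrix.mul_assoc]
  simp [trace, mul_diagonal]

lemma posSemidef_one_sub_star_mul_mul {Q : Matrix n n ℂ} (U : unitaryGroup n ℂ)
    (h : (1 - Q).PosSemidef) : (1 - star (U : Matrix n n ℂ) * Q * U).PosSemidef := by
  have := h.conjTranspose_mul_mul_same (U : Matrix n n ℂ)
  rwa [Matrix.mul_sub, Matrix.sub_mul, Matrix.mul_one, ← star_eq_conjTranspose,
    coe_star_mul_self] at this

lemma re_trace_mul_le_traceNorm {H Q : Matrix n n ℂ} (hH : H.IsHermitian)
    (h₁ : (1 - Q).PosSemidef) (h₂ : (1 + Q).PosSemidef) : (Q * H).trace.re ≤ traceNorm H := by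
  set U := hH.eigenvectorUnitary
  have h₁' := posSemidef_one_sub_star_mul_mul U h₁
  have h₂' := posSemidef_one_sub_star_mul_mul U (Q := -Q) (by rwa [sub_neg_eq_add])
  rw [Matrix.mul_neg, Matrix.neg_mul, sub_neg_eq_add] at h₂'
  have hdiag := abs_re_diag_le_one h₁' h₂'
  rw [hH.trace_mul_eq_sum_eigenvalues, Complex.re_sum, hH.traceNorm_eq]
  refine Finset.sum_le_sum fun i _ => ?_
  rw [Complex.re_mul_ofReal]
  calc _ ≤ |_ * hH.eigenvalues i| := le_abs_self _
    _ ≤ |hH.eigenvalues i| := by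
      rw [abs_mul]; exact mul_le_of_le_one_left (abs_nonneg _) (hdiag i)

lemma Matrix.PosSemidef.conjStarAlgAut {X : Matrix n n ℂ} (hX : X.PosSemidef)
    (U : unitaryGroup n ℂ) : (conjStarAlgAut ℂ _ U X).PosSemidef := by
  rw [conjStarAlgAut_apply, star_eq_conjTranspose]
  exact hX.mul_mul_conjTranspose_same _

lemma exists_re_trace_mul_eq_traceNorm {H : Matrix n n ℂ} (hH : H.IsHermitian) :
    ∃ P : Matrix n n ℂ, (1 - P).PosSemidef ∧ (1 + P).PosSemidef ∧
      (P * H).trace.re = traceNorm H := by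
  let s : n → ℝ := fun i => if 0 ≤ hH.eigenvalues i then 1 else -1
  have hs : ∀ i, s i * hH.eigenvalues i = |hH.eigenvalues i| := by
    intro i; by_cases h : 0 ≤ hH.eigenvalues i
    · simp [s, h, abs_of_nonneg]
    · simp [s, h, abs_of_neg (not_le.1 h)]
  set U := hH.eigenvectorUnitary
  refine ⟨conjStarAlgAut ℂ _ U (diagonal fun i => (s i : ℂ)), ?_, ?_, ?_⟩
  · rw [← map_one (conjStarAlgAut ℂ _ U), ← map_sub, ← diagonal_one, diagonal_sub]
    refine (PosSemidef.diagonal fun i => ?_).conjStarAlgAut U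
    by_cases h : 0 ≤ hH.eigenvalues i <;> simp [s, h, one_add_one_eq_two]
  · rw [← map_one (conjStarAlgAut ℂ _ U), ← map_add, ← diagonal_one, diagonal_add]
    refine (PosSemidef.diagonal fun i => ?_).conjStarAlgAut U
    by_cases h : 0 ≤ hH.eigenvalues i <;> simp [s, h, one_add_one_eq_two]
  · rw [hH.trace_mul_eq_sum_eigenvalues, ← conjStarAlgAut_symm_apply (S := ℂ),
      StarAlgEquiv.symm_apply_apply, Complex.re_sum, hH.traceNorm_eq]
    simp [hs]

lemma traceNorm_sub_le_two {ρ σ : Matrix n n ℂ} (hρ : IsState ρ) (hσ : IsState σ) :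
    traceNorm (ρ - σ) ≤ 2 := by
  obtain ⟨P, h₁, h₂, hP⟩ := exists_re_trace_mul_eq_traceNorm (hρ.1.1.sub hσ.1.1)
  have hρP := re_trace_mul_le_traceNorm hρ.1.1 h₁ h₂
  have hσP := re_trace_mul_le_traceNorm (Q := -P) hσ.1.1 (by rwa [sub_neg_eq_add])
    (by rwa [← sub_eq_add_neg])
  rw [hρ.1.traceNorm_eq, hρ.2] at hρP
  rw [hσ.1.traceNorm_eq, hσ.2, Matrix.neg_mul, trace_neg, Complex.neg_re] at hσP
  rw [← hP, Matrix.mul_sub, trace_sub, Complex.sub_re]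
  norm_num at hρP hσP ⊢
  linarith

end TraceNorm

section PartialTraceNorm

variable {m p : Type*} [Fintype m] [DecidableEq m] [Fintype p] [DecidableEq p]

lemma traceNorm_partialTraceRight_le {M : Matrix (m × p) (m × p) ℂ} (hM : M.IsHermitian) :
    traceNorm (partialTraceRight M) ≤ traceNorm M := by
  obtain ⟨P, h₁, h₂, hP⟩ := exists_re_trace_mul_eq_traceNorm hM.partialTraceRight
  rw [← hP, ← trace_kronecker_one_mul]
  refine re_trace_mul_le_traceNorm hM ?_ ?_
  · simpa [sub_kronecker] using h₁.kronecker (PosSemidef.one (n := p))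
  · simpa [add_kronecker] using h₂.kronecker (PosSemidef.one (n := p))

lemma traceNorm_partialTraceLeft_le {M : Matrix (m × p) (m × p) ℂ} (hM : M.IsHermitian) :
    traceNorm (partialTraceLeft M) ≤ traceNorm M := by
  obtain ⟨P, h₁, h₂, hP⟩ := exists_re_trace_mul_eq_traceNorm hM.partialTraceLeft
  rw [← hP, ← trace_one_kronecker_mul]
  refine re_trace_mul_le_traceNorm hM ?_ ?_
  · simpa [kronecker_sub] using (PosSemidef.one (n := m)).kronecker h₁
  · simpa [kronecker_add] using (PosSemidef.one (n := m)).kronecker h₂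

end PartialTraceNorm

section States

variable {n : Type*} [Fintype n]

lemma convex_setOf_isState : Convex ℝ {ρ : Matrix n n ℂ | IsState ρ} := by
  intro x hx y hy a b ha hb hab
  refine ⟨(hx.1.smul ha).add (hy.1.smul hb), ?_⟩
  rw [trace_add, trace_smul, trace_smul, hx.2, hy.2, Complex.real_smul, Complex.real_smul,
    mul_one, mul_one, ← Complex.ofReal_add, hab, Complex.ofReal_one]

lemma IsState.kronecker {m : Type*} [Fintype m] {ρ : Matrix n n ℂ}
    {σ : Matrix m m ℂ} (hρ : IsState ρ) (hσ : IsState σ) : IsState (ρ ⊗ₖ σ) :=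
  ⟨hρ.1.kronecker hσ.1, by rw [trace_kronecker, hρ.2, hσ.2, mul_one]⟩

lemma Channel.isState_map [DecidableEq n] (N : Channel n) {ρ : Matrix n n ℂ} (hρ : IsState ρ) :
    IsState (N.map ρ) :=
  -- `N.map ρ` is the only block of `(id₁ ⊗ N) ρ`, with `ρ` seen as a `1 × 1` block matrix.
  ⟨(N.cp 1 _ (hρ.1.submatrix Prod.snd)).submatrix fun i => (0, i), by rw [N.tp ρ, hρ.2]⟩

end States

section TensorMap

variable {A B : Type*} [Fintype A] [DecidableEq A] [Fintype B] [DecidableEq B]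
  (N₁ : Matrix A A ℂ →ₗ[ℂ] Matrix A A ℂ) (N₂ : Matrix B B ℂ →ₗ[ℂ] Matrix B B ℂ)

lemma tensorMapAction_kronecker (a : Matrix A A ℂ) (b : Matrix B B ℂ) :
    tensorMapAction N₁ N₂ (a ⊗ₖ b) = N₁ a ⊗ₖ N₂ b := by
  have hblock : ∀ i j, (of fun k l => (a ⊗ₖ b) (i, k) (j, l)) = a i j • b := fun i j => by
    ext; simp
  have hN₁ : N₁ a = ∑ i, ∑ j, a i j • N₁ (single i j 1) := by
    conv_lhs => rw [matrix_eq_sum_single a]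
    simp [map_sum, ← map_smul, smul_single]
  simp_rw [tensorMapAction, hblock, map_smul, kronecker_smul, ← smul_kronecker, ← sum_kronecker,
    ← hN₁]

noncomputable def tensorMapActionLinear :
    Matrix (A × B) (A × B) ℂ →ₗ[ℂ] Matrix (A × B) (A × B) ℂ where
  toFun := tensorMapAction N₁ N₂
  map_add' M M' := by
    simp only [tensorMapAction, ← Finset.sum_add_distrib, ← kronecker_add, ← map_add]
    rfl
  map_smul' c M := by
    simp only [tensorMapAction, Finset.smul_sum, ← kronecker_smul, ← map_smul, RingHom.id_apply]
    rfl

end TensorMap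

section ResourceMeasures

variable {n k : Type*} [Fintype n] [DecidableEq n] [Fintype k] [DecidableEq k]

lemma bddBelow_traceNorm_sub_image (F : Set (Matrix n n ℂ)) (X : Matrix n n ℂ) :
    BddBelow ((fun σ => traceNorm (X - σ)) '' F) :=
  ⟨0, by rintro _ ⟨_, -, rfl⟩; exact traceNorm_nonneg _⟩

lemma omega1_le_half_traceNorm_sub {F : Set (Matrix n n ℂ)} {σ : Matrix n n ℂ} (hσ : σ ∈ F)
    (X : Matrix n n ℂ) : omega1 F X ≤ 1 / 2 * traceNorm (X - σ) := by
  refine mul_le_mul_of_nonneg_left ?_ (by norm_num)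
  exact csInf_le (bddBelow_traceNorm_sub_image F X) ⟨σ, hσ, rfl⟩

lemma omega1_le_omega1_of_forall_exists {F : Set (Matrix n n ℂ)} {G : Set (Matrix k k ℂ)}
    {X : Matrix n n ℂ} {Y : Matrix k k ℂ} (hG : G.Nonempty)
    (h : ∀ τ ∈ G, ∃ σ ∈ F, traceNorm (X - σ) ≤ traceNorm (Y - τ)) :
    omega1 F X ≤ omega1 G Y := by
  refine mul_le_mul_of_nonneg_left ?_ (by norm_num)
  refine le_csInf (hG.image fun τ => traceNorm (Y - τ)) ?_
  rintro _ ⟨τ, hτ, rfl⟩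
  obtain ⟨σ, hσ, hle⟩ := h τ hτ
  exact (csInf_le (bddBelow_traceNorm_sub_image F X) ⟨σ, hσ, rfl⟩).trans hle

lemma bddAbove_omega1_image {G : Set (Matrix k k ℂ)} {M : Matrix k k ℂ → Matrix k k ℂ}
    {σ : Matrix k k ℂ} (hσ : σ ∈ G) (hG : ∀ τ ∈ G, IsState τ) (hM : ∀ τ ∈ G, IsState (M τ)) :
    BddAbove ((fun τ => omega1 G (M τ)) '' G) := by
  refine ⟨1, ?_⟩
  rintro _ ⟨τ, hτ, rfl⟩
  have := traceNorm_sub_le_two (hM τ hτ) (hG σ hσ)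
  linarith [omega1_le_half_traceNorm_sub hσ (M τ)]

lemma genPower1_le_genPower1_of_forall {F : Set (Matrix n n ℂ)} {G : Set (Matrix k k ℂ)}
    {N : Matrix n n ℂ → Matrix n n ℂ} {M : Matrix k k ℂ → Matrix k k ℂ} (hF : F.Nonempty)
    (hG : BddAbove ((fun τ => omega1 G (M τ)) '' G)) (f : Matrix n n ℂ → Matrix k k ℂ)
    (hf : ∀ ρ ∈ F, f ρ ∈ G ∧ omega1 F (N ρ) ≤ omega1 G (M (f ρ))) :
    genPower1 F N ≤ genPower1 G M := by
  refine csSup_le (hF.image _) ?_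
  rintro _ ⟨ρ, hρ, rfl⟩
  exact (hf ρ hρ).2.trans (le_csSup hG ⟨f ρ, (hf ρ hρ).1, rfl⟩)

end ResourceMeasures

section ProductFreeStates

variable {A B : Type*} {FA : Set (Matrix A A ℂ)} {FB : Set (Matrix B B ℂ)}

variable (FA FB) in
def productFreeStates : Set (Matrix (A × B) (A × B) ℂ) :=
  convexHull ℝ {ρ | ∃ a ∈ FA, ∃ b ∈ FB, ρ = a ⊗ₖ b}

lemma kronecker_mem_productFreeStates {a : Matrix A A ℂ} {b : Matrix B B ℂ} (ha : a ∈ FA)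
    (hb : b ∈ FB) : a ⊗ₖ b ∈ productFreeStates FA FB :=
  subset_convexHull ℝ _ ⟨a, ha, b, hb, rfl⟩

lemma isState_of_mem_productFreeStates [Fintype A] [Fintype B] (hFA : ∀ a ∈ FA, IsState a)
    (hFB : ∀ b ∈ FB, IsState b) {τ : Matrix (A × B) (A × B) ℂ}
    (hτ : τ ∈ productFreeStates FA FB) : IsState τ :=
  convexHull_min (by rintro _ ⟨a, ha, b, hb, rfl⟩; exact (hFA a ha).kronecker (hFB b hb))
    convex_setOf_isState hτ

lemma mapsTo_partialTraceRight_productFreeStates [Fintype B] (hFA : Convex ℝ FA)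
    (hFB : ∀ b ∈ FB, IsState b) :
    Set.MapsTo partialTraceRight (productFreeStates FA FB) FA :=
  Set.MapsTo.convexHull (f := partialTraceRight.restrictScalars ℝ)
    (by rintro _ ⟨a, ha, b, hb, rfl⟩; simpa [partialTraceRight_kronecker, (hFB b hb).2]) hFA

lemma mapsTo_partialTraceLeft_productFreeStates [Fintype A] (hFA : ∀ a ∈ FA, IsState a)
    (hFB : Convex ℝ FB) :
    Set.MapsTo partialTraceLeft (productFreeStates FA FB) FB :=
  Set.MapsTo.convexHull (f := partialTraceLeft.restrictScalars ℝ)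
    (by rintro _ ⟨a, ha, b, hb, rfl⟩; simpa [partialTraceLeft_kronecker, (hFA a ha).2]) hFB

lemma mapsTo_tensorMapAction_productFreeStates [Fintype A] [DecidableEq A] [Fintype B]
    [DecidableEq B] (N₁ : Channel A) (N₂ : Channel B) (hFA : ∀ a ∈ FA, IsState a)
    (hFB : ∀ b ∈ FB, IsState b) :
    Set.MapsTo (tensorMapAction N₁.map N₂.map) (productFreeStates FA FB) {ρ | IsState ρ} :=
  Set.MapsTo.convexHull (f := (tensorMapActionLinear N₁.map N₂.map).restrictScalars ℝ)
    (by
      rintro _ ⟨a, ha, b, hb, rfl⟩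
      show IsState (tensorMapAction N₁.map N₂.map (a ⊗ₖ b))
      rw [tensorMapAction_kronecker]
      exact (N₁.isState_map (hFA a ha)).kronecker (N₂.isState_map (hFB b hb)))
    convex_setOf_isState

lemma omega1_le_omega1_kronecker_right [Fintype A] [DecidableEq A] [Fintype B] [DecidableEq B]
    (hFA : ∀ a ∈ FA, IsState a) (hFAconv : Convex ℝ FA)
    (hFB : ∀ b ∈ FB, IsState b) (hne : (productFreeStates FA FB).Nonempty)
    {X : Matrix A A ℂ} {Y : Matrix B B ℂ} (hX : X.IsHermitian) (hY : IsState Y) :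
    omega1 FA X ≤ omega1 (productFreeStates FA FB) (X ⊗ₖ Y) := by
  refine omega1_le_omega1_of_forall_exists hne fun τ hτ =>
    ⟨partialTraceRight τ, mapsTo_partialTraceRight_productFreeStates hFAconv hFB hτ, ?_⟩
  calc traceNorm (X - partialTraceRight τ) = traceNorm (partialTraceRight (X ⊗ₖ Y - τ)) := by
        rw [map_sub, partialTraceRight_kronecker, hY.2, one_smul]
    _ ≤ traceNorm (X ⊗ₖ Y - τ) := traceNorm_partialTraceRight_le <|
        (hX.kronecker hY.1.1).sub (isState_of_mem_productFreeStates hFA hFB hτ).1.1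

lemma omega1_le_omega1_kronecker_left [Fintype A] [DecidableEq A] [Fintype B] [DecidableEq B]
    (hFA : ∀ a ∈ FA, IsState a) (hFB : ∀ b ∈ FB, IsState b)
    (hFBconv : Convex ℝ FB) (hne : (productFreeStates FA FB).Nonempty)
    {X : Matrix A A ℂ} {Y : Matrix B B ℂ} (hX : IsState X) (hY : Y.IsHermitian) :
    omega1 FB Y ≤ omega1 (productFreeStates FA FB) (X ⊗ₖ Y) := by
  refine omega1_le_omega1_of_forall_exists hne fun τ hτ =>
    ⟨partialTraceLeft τ, mapsTo_partialTraceLeft_productFreeStates hFA hFBconv hτ, ?_⟩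
  calc traceNorm (Y - partialTraceLeft τ) = traceNorm (partialTraceLeft (X ⊗ₖ Y - τ)) := by
        rw [map_sub, partialTraceLeft_kronecker, hX.2, one_smul]
    _ ≤ traceNorm (X ⊗ₖ Y - τ) := traceNorm_partialTraceLeft_le <|
        (hX.1.1.kronecker hY).sub (isState_of_mem_productFreeStates hFA hFB hτ).1.1

end ProductFreeStates

theorem stmt6_general {A B : Type*} [Fintype A] [DecidableEq A] [Fintype B] [DecidableEq B]
    (FA : Set (Matrix A A ℂ)) (hFAne : FA.Nonempty) (hFAstate : ∀ ρ ∈ FA, IsState ρ)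
    (hFAconv : Convex ℝ FA)
    (FB : Set (Matrix B B ℂ)) (hFBne : FB.Nonempty) (hFBstate : ∀ ρ ∈ FB, IsState ρ)
    (hFBconv : Convex ℝ FB)
    (N₁ : Channel A) (N₂ : Channel B) :
    max (genPower1 FA (⇑N₁.map)) (genPower1 FB (⇑N₂.map))
      ≤ genPower1 (convexHull ℝ {ρ : Matrix (A × B) (A × B) ℂ | ∃ a ∈ FA, ∃ b ∈ FB, ρ = a ⊗ₖ b})
          (tensorMapAction N₁.map N₂.map) := by
  obtain ⟨a₀, ha₀⟩ := hFAne
  obtain ⟨b₀, hb₀⟩ := hFBne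
  have hτ₀ := kronecker_mem_productFreeStates ha₀ hb₀
  have hbdd := bddAbove_omega1_image hτ₀
    (fun _ => isState_of_mem_productFreeStates hFAstate hFBstate) fun _ hτ =>
      mapsTo_tensorMapAction_productFreeStates N₁ N₂ hFAstate hFBstate hτ
  refine max_le (genPower1_le_genPower1_of_forall ⟨a₀, ha₀⟩ hbdd (· ⊗ₖ b₀) ?_)
    (genPower1_le_genPower1_of_forall ⟨b₀, hb₀⟩ hbdd (a₀ ⊗ₖ ·) ?_)
  · intro ρ hρ
    refine ⟨kronecker_mem_productFreeStates hρ hb₀, ?_⟩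
    rw [tensorMapAction_kronecker]
    exact omega1_le_omega1_kronecker_right hFAstate hFAconv hFBstate ⟨_, hτ₀⟩
      (N₁.isState_map (hFAstate ρ hρ)).1.1 (N₂.isState_map (hFBstate b₀ hb₀))
  · intro ρ hρ
    refine ⟨kronecker_mem_productFreeStates ha₀ hρ, ?_⟩
    rw [tensorMapAction_kronecker]
    exact omega1_le_omega1_kronecker_left hFAstate hFBstate hFBconv ⟨_, hτ₀⟩
      (N₁.isState_map (hFAstate a₀ ha₀)) (N₂.isState_map (hFBstate ρ hρ)).1.1

/-- `Ω₁(N₁ ⊗ N₂) ≥ max{Ω₁(N₁), Ω₁(N₂)}` when the free states of the composite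
system are the convex hull of products of free states. -/
theorem stmt6 {A B : Type*} [Fintype A] [DecidableEq A] [Fintype B] [DecidableEq B]
    (FA : Set (Matrix A A ℂ)) (hFAne : FA.Nonempty) (hFAstate : ∀ ρ ∈ FA, IsState ρ)
    (hFAconv : Convex ℝ FA) (hFAclosed : IsClosed FA)
    (FB : Set (Matrix B B ℂ)) (hFBne : FB.Nonempty) (hFBstate : ∀ ρ ∈ FB, IsState ρ)
    (hFBconv : Convex ℝ FB) (hFBclosed : IsClosed FB)
    (N₁ : Channel A) (N₂ : Channel B) :
    max (genPower1 FA (⇑N₁.map)) (genPower1 FB (⇑N₂.map))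
      ≤ genPower1 (convexHull ℝ {ρ : Matrix (A × B) (A × B) ℂ | ∃ a ∈ FA, ∃ b ∈ FB, ρ = a ⊗ₖ b})
          (tensorMapAction N₁.map N₂.map) :=
  stmt6_general FA hFAne hFAstate hFAconv FB hFBne hFBstate hFBconv N₁ N₂
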